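/- arXiv:1906.00914 — 3 statements merged into one kernel-verified Lean document; each statement's English description precedes it below -/
import Mathlib

section
/- Let V be a nonempty finite set and F a field with char(F) = 0 or char(F) > |V|. Then every coherent algebra on V over F is semisimple as a ring with respect to matrix multiplication. -/
open Classical Matrix

noncomputable section

/-- `k`-tuples of elements of `V`. -/
abbrev Tup (V : Type) (k : ℕ) := Fin k → V

variable {V : Type}

/-- `v⟨i,x⟩` : the tuple obtained from `v` by substituting, for each `s`,
the entry of `v` in position `i s` by `x s`. -/
def substTup {k r : ℕ} (v : Tup V k) (i : Fin r → Fin k) (x : Tup V r) : Tup V k :=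
  fun j => if h : ∃ s, i s = j then x h.choose else v j

/-- `pr_j v = (v_{j 1}, …, v_{j r})`. -/
def prTup {k r : ℕ} (j : Fin r → Fin k) (v : Tup V k) : Tup V r := fun s => v (j s)

/-- `(w_1, …, w_r, w_r, …, w_r) : V^k`. -/
def extendTup [Nonempty V] {r : ℕ} (k : ℕ) (w : Tup V r) : Tup V k := fun i =>
  if h : (i : ℕ) < r then w ⟨i, h⟩
  else if h' : 0 < r then w ⟨r - 1, by omega⟩
  else Classical.arbitrary V

/-- The `r`-projection `pr_r γ` of a labelled partition (presented as a setoid) of `V^k`. -/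
def prPart [Nonempty V] {k : ℕ} (r : ℕ) (γ : Setoid (Tup V k)) : Setoid (Tup V r) where
  r w w' := γ.r (extendTup k w) (extendTup k w')
  iseqv := ⟨fun _ => γ.iseqv.refl _, fun h => γ.iseqv.symm h, fun h h' => γ.iseqv.trans h h'⟩

/-- `v^τ`, the tuple with `i`-th entry `v (τ⁻¹ i)`. -/
def permTup {k : ℕ} (τ : Equiv.Perm (Fin k)) (v : Tup V k) : Tup V k := fun i => v (τ.symm i)

/-- `γ ⪯ ρ` : the partition `ρ` refines the partition `γ`. -/
def Refines {A : Type*} (γ ρ : Setoid A) : Prop := ∀ u v : A, ρ.r u v → γ.r u v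

/-- `γ ≈ ρ` : the partitions mutually refine each other. -/
def PartEquiv {A : Type*} (γ ρ : Setoid A) : Prop := Refines γ ρ ∧ Refines ρ γ

/-- Invariance of a partition of `V^k` under `Sym(k)`. -/
def Invariant {k : ℕ} (γ : Setoid (Tup V k)) : Prop :=
  ∀ u v : Tup V k, γ.r u v → ∀ τ : Equiv.Perm (Fin k), γ.r (permTup τ u) (permTup τ v)

/-- `r`-consistency of a partition of `V^k`. -/
def Consistent [Nonempty V] {k : ℕ} (r : ℕ) (γ : Setoid (Tup V k)) : Prop :=
  ∀ u v : Tup V k, γ.r u v → ∀ j : Fin r → Fin k,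
    (prPart r γ).r (prTup j u) (prTup j v)

/-- Graph-like partitions of `V^k`. -/
def GraphLike [Nonempty V] {k : ℕ} (γ : Setoid (Tup V k)) : Prop :=
  Invariant γ ∧ (∀ r ≤ k, Consistent r γ) ∧
    ∀ u v : Tup V k, γ.r u v → ∀ i j : Fin k, u i = u j → v i = v j

/-- `{x ∈ V^r : γ(u⟨i,x⟩) = φ_i for all i ∈ [k]^(r)}`, where the colour tuple `φ` is
given by representatives. -/
def WLSet {k r : ℕ} (γ : Setoid (Tup V k)) (u : Tup V k)
    (φ : (Fin r → Fin k) → Tup V k) : Set (Tup V r) :=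
  {x | ∀ i : Fin r → Fin k, Function.Injective i → γ.r (substTup u i x) (φ i)}

/-- `{x ∈ V^r : γ(u⟨i,x⟩) = σ}`, where the colour `σ` is given by a representative `w`. -/
def CSet {k r : ℕ} (γ : Setoid (Tup V k)) (u : Tup V k)
    (i : Fin r → Fin k) (w : Tup V k) : Set (Tup V r) :=
  {x | γ.r (substTup u i x) w}

/-- `WL_{k,r}`-stability of a partition of `V^k`. -/
def WLStable {k : ℕ} (r : ℕ) (γ : Setoid (Tup V k)) : Prop :=
  r < k → ∀ u v : Tup V k, γ.r u v →
    ∀ φ : (Fin r → Fin k) → Tup V k, (WLSet γ u φ).ncard = (WLSet γ v φ).ncard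

/-- `C_{k,r}`-stability of a partition of `V^k`. -/
def CStable {k : ℕ} (r : ℕ) (γ : Setoid (Tup V k)) : Prop :=
  r < k → ∀ u v : Tup V k, γ.r u v →
    ∀ i : Fin r → Fin k, Function.Injective i → ∀ w : Tup V k,
      (CSet γ u i w).ncard = (CSet γ v i w).ncard

/-- The matrix `χ^{γ,v}_{i,σ}`, with the colour `σ` given by a representative `w`. -/
def chiMat (F : Type) [Field F] {k : ℕ} (γ : Setoid (Tup V k)) (v : Tup V k)
    (i : Fin 2 → Fin k) (w : Tup V k) : Matrix V V F :=
  Matrix.of fun x y => if γ.r (substTup v i ![x, y]) w then (1 : F) else 0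

/-- The matrix `χ^{γ,v}_φ`, with the colour tuple `φ` given by representatives. -/
def chiMatT (F : Type) [Field F] {k : ℕ} (γ : Setoid (Tup V k)) (v : Tup V k)
    (φ : (Fin 2 → Fin k) → Tup V k) : Matrix V V F :=
  Matrix.of fun x y =>
    if ∀ i : Fin 2 → Fin k, Function.Injective i → γ.r (substTup v i ![x, y]) (φ i)
    then (1 : F) else 0

/-- `IM_k^F`-stability of a partition of `V^k`. -/
def IMStable (F : Type) [Field F] [Fintype V] [DecidableEq V] {k : ℕ}
    (γ : Setoid (Tup V k)) : Prop :=
  2 < k → ∀ u v : Tup V k, γ.r u v →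
    ∀ i : Fin 2 → Fin k, Function.Injective i →
      ∃ S : (Matrix V V F)ˣ, ∀ w : Tup V k,
        (S : Matrix V V F) * chiMat F γ u i w * ((S⁻¹ : (Matrix V V F)ˣ) : Matrix V V F)
          = chiMat F γ v i w

/-- `IMt_k^F`-stability of a partition of `V^k`. -/
def IMtStable (F : Type) [Field F] [Fintype V] [DecidableEq V] {k : ℕ}
    (γ : Setoid (Tup V k)) : Prop :=
  2 < k → ∀ u v : Tup V k, γ.r u v →
    ∃ S : (Matrix V V F)ˣ, ∀ φ : (Fin 2 → Fin k) → Tup V k,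
      (S : Matrix V V F) * chiMatT F γ u φ * ((S⁻¹ : (Matrix V V F)ˣ) : Matrix V V F)
        = chiMatT F γ v φ

/-- The refinement operator `WL_{k,r}`. -/
def WLop {k : ℕ} (r : ℕ) (γ : Setoid (Tup V k)) : Setoid (Tup V k) :=
  if r < k then
    { r := fun u v => γ.r u v ∧ ∀ φ : (Fin r → Fin k) → Tup V k,
        (WLSet γ u φ).ncard = (WLSet γ v φ).ncard
      iseqv := by
        refine ⟨fun u => ⟨γ.iseqv.refl u, fun _ => rfl⟩, ?_, ?_⟩
        · rintro u v ⟨h1, h2⟩; exact ⟨γ.iseqv.symm h1, fun φ => (h2 φ).symm⟩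
        · rintro u v w ⟨h1, h2⟩ ⟨h1', h2'⟩
          exact ⟨γ.iseqv.trans h1 h1', fun φ => (h2 φ).trans (h2' φ)⟩ }
  else γ

/-- The refinement operator `C_{k,r}`. -/
def Cop {k : ℕ} (r : ℕ) (γ : Setoid (Tup V k)) : Setoid (Tup V k) :=
  if r < k then
    { r := fun u v => γ.r u v ∧ ∀ i : Fin r → Fin k, Function.Injective i →
        ∀ w : Tup V k, (CSet γ u i w).ncard = (CSet γ v i w).ncard
      iseqv := by
        refine ⟨fun u => ⟨γ.iseqv.refl u, fun _ _ _ => rfl⟩, ?_, ?_⟩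
        · rintro u v ⟨h1, h2⟩; exact ⟨γ.iseqv.symm h1, fun i hi w => (h2 i hi w).symm⟩
        · rintro u v w ⟨h1, h2⟩ ⟨h1', h2'⟩
          exact ⟨γ.iseqv.trans h1 h1', fun i hi x => (h2 i hi x).trans (h2' i hi x)⟩ }
  else γ


theorem conjRefl {M : Type*} [Monoid M] (A : M) :
    ((1 : Mˣ) : M) * A * (((1 : Mˣ)⁻¹ : Mˣ) : M) = A := by simp

theorem conjSymm {M : Type*} [Monoid M] (S : Mˣ) {A B : M}
    (h : (S : M) * A * ((S⁻¹ : Mˣ) : M) = B) :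
    ((S⁻¹ : Mˣ) : M) * B * (((S⁻¹)⁻¹ : Mˣ) : M) = A := by
  subst h
  rw [inv_inv]
  simp [mul_assoc, Units.inv_mul_cancel_left, Units.inv_mul]

theorem conjTrans {M : Type*} [Monoid M] (S T : Mˣ) {A B C : M}
    (h1 : (S : M) * A * ((S⁻¹ : Mˣ) : M) = B)
    (h2 : (T : M) * B * ((T⁻¹ : Mˣ) : M) = C) :
    ((T * S : Mˣ) : M) * A * (((T * S)⁻¹ : Mˣ) : M) = C := by
  subst h1; subst h2
  simp [Units.val_mul, _root_.mul_inv_rev, mul_assoc]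

/-- The refinement operator `IM_k^F`. -/
def IMop (F : Type) [Field F] [Fintype V] [DecidableEq V] {k : ℕ}
    (γ : Setoid (Tup V k)) : Setoid (Tup V k) :=
  if 2 < k then
    { r := fun u v => γ.r u v ∧ ∀ i : Fin 2 → Fin k, Function.Injective i →
        ∃ S : (Matrix V V F)ˣ, ∀ w : Tup V k,
          (S : Matrix V V F) * chiMat F γ u i w * ((S⁻¹ : (Matrix V V F)ˣ) : Matrix V V F)
            = chiMat F γ v i w
      iseqv := by
        refine ⟨fun u => ⟨γ.iseqv.refl u, fun i _ => ⟨1, fun w => conjRefl _⟩⟩, ?_, ?_⟩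
        · rintro u v ⟨h1, h2⟩
          refine ⟨γ.iseqv.symm h1, fun i hi => ?_⟩
          obtain ⟨S, hS⟩ := h2 i hi
          exact ⟨S⁻¹, fun w => conjSymm S (hS w)⟩
        · rintro u v w ⟨h1, h2⟩ ⟨h1', h2'⟩
          refine ⟨γ.iseqv.trans h1 h1', fun i hi => ?_⟩
          obtain ⟨S, hS⟩ := h2 i hi
          obtain ⟨T, hT⟩ := h2' i hi
          exact ⟨T * S, fun x => conjTrans S T (hS x) (hT x)⟩ }
  else γ

/-- The refinement operator `IMt_k^F`. -/
def IMtop (F : Type) [Field F] [Fintype V] [DecidableEq V] {k : ℕ}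
    (γ : Setoid (Tup V k)) : Setoid (Tup V k) :=
  if 2 < k then
    { r := fun u v => γ.r u v ∧
        ∃ S : (Matrix V V F)ˣ, ∀ φ : (Fin 2 → Fin k) → Tup V k,
          (S : Matrix V V F) * chiMatT F γ u φ * ((S⁻¹ : (Matrix V V F)ˣ) : Matrix V V F)
            = chiMatT F γ v φ
      iseqv := by
        refine ⟨fun u => ⟨γ.iseqv.refl u, ⟨1, fun φ => conjRefl _⟩⟩, ?_, ?_⟩
        · rintro u v ⟨h1, ⟨S, hS⟩⟩
          exact ⟨γ.iseqv.symm h1, ⟨S⁻¹, fun φ => conjSymm S (hS φ)⟩⟩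
        · rintro u v w ⟨h1, ⟨S, hS⟩⟩ ⟨h1', ⟨T, hT⟩⟩
          exact ⟨γ.iseqv.trans h1 h1', ⟨T * S, fun φ => conjTrans S T (hS φ) (hT φ)⟩⟩ }
  else γ

/-- Iterate a refinement operator `|V|^k` times, reaching its stable fixed point. -/
def stabilize [Fintype V] {k : ℕ} (R : Setoid (Tup V k) → Setoid (Tup V k))
    (γ : Setoid (Tup V k)) : Setoid (Tup V k) :=
  R^[Fintype.card V ^ k] γ

/-- A graph on `V` : a labelled partition of `V²` that is a rainbow. -/
def IsGraph (Γ : Setoid (Tup V 2)) : Prop :=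
  (∀ u x y : V, Γ.r ![u, u] ![x, y] → x = y) ∧
  (∀ u v u' v' : V, Γ.r ![u, v] ![u', v'] ↔ Γ.r ![v, u] ![v', u'])

/-- The atomic-type partition `α_{k,Γ}` of `V^k` determined by a graph `Γ`. -/
def atomicPart {k : ℕ} (Γ : Setoid (Tup V 2)) : Setoid (Tup V k) where
  r u v := ∀ i j : Fin k, i ≠ j → Γ.r ![u i, u j] ![v i, v j]
  iseqv := ⟨fun _ _ _ _ => Γ.iseqv.refl _, fun h i j hij => Γ.iseqv.symm (h i j hij),
    fun h h' i j hij => Γ.iseqv.trans (h i j hij) (h' i j hij)⟩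

/-- `WL̄_{k,r}(Γ)`. -/
def WLbarR [Nonempty V] [Fintype V] (k r : ℕ) (Γ : Setoid (Tup V 2)) : Setoid (Tup V 2) :=
  if k ≤ 1 then Γ else prPart 2 (stabilize (WLop (k := k) r) (atomicPart Γ))

/-- `C̄_{k,r}(Γ)`. -/
def CbarR [Nonempty V] [Fintype V] (k r : ℕ) (Γ : Setoid (Tup V 2)) : Setoid (Tup V 2) :=
  if k ≤ 1 then Γ else prPart 2 (stabilize (Cop (k := k) r) (atomicPart Γ))

/-- `WL̄_k(Γ) = WL̄_{k,1}(Γ)`. -/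
def WLbar [Nonempty V] [Fintype V] (k : ℕ) (Γ : Setoid (Tup V 2)) : Setoid (Tup V 2) :=
  WLbarR k 1 Γ

/-- `C̄_k(Γ) = C̄_{k,1}(Γ)`. -/
def Cbar [Nonempty V] [Fintype V] (k : ℕ) (Γ : Setoid (Tup V 2)) : Setoid (Tup V 2) :=
  CbarR k 1 Γ

/-- `IM̄_k^F(Γ)`. -/
def IMbar (F : Type) [Field F] [Nonempty V] [Fintype V] [DecidableEq V]
    (k : ℕ) (Γ : Setoid (Tup V 2)) : Setoid (Tup V 2) :=
  if k ≤ 1 then Γ else prPart 2 (stabilize (IMop (k := k) F) (atomicPart Γ))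

/-- `IMt̄_k^F(Γ)`. -/
def IMtbar (F : Type) [Field F] [Nonempty V] [Fintype V] [DecidableEq V]
    (k : ℕ) (Γ : Setoid (Tup V 2)) : Setoid (Tup V 2) :=
  if k ≤ 1 then Γ else prPart 2 (stabilize (IMtop (k := k) F) (atomicPart Γ))

/-- A nonempty finite set together with a graph on it. -/
structure FinGraph where
  V : Type
  [instFintype : Fintype V]
  [instDecEq : DecidableEq V]
  [instNonempty : Nonempty V]
  Γ : Setoid (Tup V 2)
  isGraph : IsGraph Γ

attribute [instance] FinGraph.instFintype FinGraph.instDecEq FinGraph.instNonempty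

/-- A 0-1 matrix. -/
def Is01 {F : Type} [Field F] (A : Matrix V V F) : Prop :=
  ∀ x y : V, A x y = 0 ∨ A x y = 1

/-- The coherence conditions on a (finite) set of 0-1 matrices. -/
def CoherenceConds (F : Type) [Field F] [Fintype V] [DecidableEq V]
    (M : Finset (Matrix V V F)) : Prop :=
  (∑ A ∈ M, A) = Matrix.of (fun _ _ => (1 : F)) ∧
  (∃ N ⊆ M, (∑ A ∈ N, A) = (1 : Matrix V V F)) ∧
  (∀ A ∈ M, Aᵀ ∈ M)

/-- A coherent algebra on `V` over `F` : a unital subalgebra of `Mat_V(F)` containing the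
all-ones matrix `J`, closed under the Schur–Hadamard product and under transposition. -/
structure IsCoherentAlgebra (F : Type) [Field F] [Fintype V] [DecidableEq V]
    (W : Subalgebra F (Matrix V V F)) : Prop where
  allOnes_mem : Matrix.of (fun _ _ => (1 : F)) ∈ W
  hadamard_mem : ∀ A B : Matrix V V F, A ∈ W → B ∈ W → A ⊙ B ∈ W
  transpose_mem : ∀ A : Matrix V V F, A ∈ W → Aᵀ ∈ W

/-!
The trace form `(A, B) ↦ tr (A B)` is nondegenerate on a coherent algebra `W`: if `A x y ≠ 0`,
let `e` and `f` be the 0-1 matrices of the cells of `W` containing `(x, y)` and `(x, x)`, which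
lie in `W` since Schur products of affine functions of members of `W` cut the cells out. Then
`tr (A (f e)ᵀ) = A x y · |Ω| · r`, with `Ω` the fibre of `f` and `r` the valency of `e` (a diagonal
entry of `e eᵀ ∈ W`); both lie in `[1, |V|]`, hence are nonzero in `F`. As the trace kills
nilpotent matrices, the nilpotent Jacobson radical of the Artinian ring `W` is then zero.
-/

theorem isSemisimpleRing_of_nondegenerate {R F : Type*} [Ring R] [IsArtinianRing R] [Zero F]
    (τ : R → F) (hnil : ∀ a : R, IsNilpotent a → τ a = 0)
    (hnondeg : ∀ a : R, a ≠ 0 → ∃ b : R, τ (a * b) ≠ 0) : IsSemisimpleRing R := by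
  refine IsArtinianRing.isSemisimpleRing_iff_jacobson.mpr (eq_bot_iff.mpr fun a ha => ?_)
  obtain ⟨n, hn⟩ := IsSemiprimaryRing.isNilpotent (R := R)
  by_contra ha0
  obtain ⟨b, hb⟩ := hnondeg a (by simpa using ha0)
  refine hb (hnil _ ⟨n, ?_⟩)
  simpa [hn] using Ideal.pow_mem_pow (Ideal.mul_mem_right b _ ha) n

theorem natCast_ne_zero_of_le_of_lt_ringChar {F : Type*} [Ring F] {m n : ℕ}
    (hchar : ringChar F = 0 ∨ n < ringChar F) (hm : 0 < m) (hmn : m ≤ n) : (m : F) ≠ 0 := by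
  rw [Ne, ringChar.spec]
  intro hdvd
  rcases hchar with h | h
  · rw [h, zero_dvd_iff] at hdvd
    omega
  · have := Nat.le_of_dvd hm hdvd
    omega

section Cells

variable {F : Type} [Field F]

/-- For a coherent algebra `S` this is the adjacency matrix of the basis relation of its coherent
configuration containing `(x, y)`. -/
def cell (S : Set (Matrix V V F)) (x y : V) : Matrix V V F :=
  of fun z w => if ∀ B ∈ S, B z w = B x y then 1 else 0

theorem cell_mul_apply_eq {S : Set (Matrix V V F)} {M : Matrix V V F} (hM : M ∈ S)
    (x y z w : V) : cell S x y z w * M z w = cell S x y z w * M x y := by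
  by_cases h : ∀ B ∈ S, B z w = B x y <;> simp [cell, h, hM]

theorem cell_mul_cell_transpose_apply_self [Fintype V] (S : Set (Matrix V V F)) (x y z : V) :
    (cell S x y * (cell S x y)ᵀ) z z = ∑ w, cell S x y z w := by
  simp only [mul_apply, transpose_apply]
  refine Finset.sum_congr rfl fun w _ => ?_
  by_cases h : ∀ B ∈ S, B z w = B x y <;> simp [cell, h]

theorem cell_self_mul_apply [Fintype V] [DecidableEq V] {S : Set (Matrix V V F)} (h1 : 1 ∈ S)
    (x : V) (M : Matrix V V F) (z w : V) : (cell S x x * M) z w = cell S x x z z * M z w := by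
  rw [mul_apply, Finset.sum_eq_single z (fun u _ hu => ?_) (by simp)]
  have h := cell_mul_apply_eq h1 x x z u
  rw [one_apply_ne hu.symm, one_apply_eq, mul_zero, mul_one] at h
  rw [← h, zero_mul]

theorem prod_hadamard_mem {ι : Type*} (S : Submodule F (Matrix V V F))
    (hJ : of (fun _ _ => (1 : F)) ∈ S) (hS : ∀ A B, A ∈ S → B ∈ S → A ⊙ B ∈ S)
    (s : Finset ι) (N : ι → Matrix V V F) (hN : ∀ i ∈ s, N i ∈ S) :
    of (fun z w => ∏ i ∈ s, N i z w) ∈ S := by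
  induction s using Finset.induction_on with
  | empty => simpa using hJ
  | insert i s hi ih =>
    have h := hS _ _ (hN i (s.mem_insert_self i)) (ih fun j hj => hN j (s.mem_insert_of_mem hj))
    convert h using 1
    ext z w
    simp [Finset.prod_insert hi, hadamard]

theorem exists_mem_separating (S : Submodule F (Matrix V V F))
    (hJ : of (fun _ _ => (1 : F)) ∈ S) (x y z w : V) :
    ∃ N ∈ S, (∀ z' w', (∀ B ∈ S, B z' w' = B x y) → N z' w' = 1) ∧
      (¬ (∀ B ∈ S, B z w = B x y) → N z w = 0) := by
  by_cases h : ∀ B ∈ S, B z w = B x y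
  · exact ⟨_, hJ, fun _ _ _ => rfl, fun h0 => absurd h h0⟩
  obtain ⟨B, hB, hne⟩ := not_forall₂.mp h
  -- the affine function of `B` taking the value `1` at `(x, y)` and `0` at `(z, w)`
  refine ⟨(B x y - B z w)⁻¹ • (B - B z w • of fun _ _ => 1),
    S.smul_mem _ (S.sub_mem hB (S.smul_mem _ hJ)), fun z' w' h1 => ?_, fun _ => by simp⟩
  simp [h1 B hB, sub_ne_zero.mpr (Ne.symm hne)]

theorem cell_mem [Fintype V] (S : Submodule F (Matrix V V F)) (hJ : of (fun _ _ => (1 : F)) ∈ S)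
    (hS : ∀ A B, A ∈ S → B ∈ S → A ⊙ B ∈ S) (x y : V) :
    cell (S : Set (Matrix V V F)) x y ∈ S := by
  choose N hNS hN1 hN0 using fun q : V × V => exists_mem_separating S hJ x y q.1 q.2
  convert prod_hadamard_mem S hJ hS Finset.univ N fun q _ => hNS q using 1
  ext z w
  by_cases h : ∀ B ∈ S, B z w = B x y
  · simp only [cell, of_apply, SetLike.mem_coe, if_pos h]
    exact (Finset.prod_eq_one fun q _ => hN1 q z w h).symm
  · simp only [cell, of_apply, SetLike.mem_coe, if_neg h]
    exact (Finset.prod_eq_zero (Finset.mem_univ (z, w)) (hN0 (z, w) h)).symm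

end Cells

namespace IsCoherentAlgebra

variable {F : Type} [Field F] [Fintype V] [DecidableEq V] {W : Subalgebra F (Matrix V V F)}

theorem cell_mem (hW : IsCoherentAlgebra F W) (x y : V) : cell (W : Set (Matrix V V F)) x y ∈ W :=
  _root_.cell_mem (Subalgebra.toSubmodule W) hW.allOnes_mem hW.hadamard_mem x y

theorem trace_mul_cell_transpose (hW : IsCoherentAlgebra F W) {A : Matrix V V F} (hA : A ∈ W)
    (x y : V) :
    trace (A * (cell (W : Set (Matrix V V F)) x x * cell (W : Set (Matrix V V F)) x y)ᵀ) =
      A x y * ((∑ z, cell (W : Set (Matrix V V F)) x x z z) *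
        (cell (W : Set (Matrix V V F)) x y * (cell (W : Set (Matrix V V F)) x y)ᵀ) x x) := by
  rw [← sum_hadamard_eq]
  simp only [Finset.sum_mul, Finset.mul_sum]
  refine Finset.sum_congr rfl fun z _ => ?_
  simp only [hadamard_apply, cell_self_mul_apply W.one_mem]
  have hee := W.mul_mem (hW.cell_mem x y) (hW.transpose_mem _ (hW.cell_mem x y))
  set e := cell (W : Set (Matrix V V F)) x y
  set f := cell (W : Set (Matrix V V F)) x x
  calc ∑ w, A z w * (f z z * e z w) = f z z * ∑ w, e z w * A x y := by
        rw [Finset.mul_sum]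
        refine Finset.sum_congr rfl fun w _ => ?_
        rw [← cell_mul_apply_eq hA x y z w]
        ring
    _ = f z z * (e * eᵀ) x x * A x y := by
        rw [← Finset.sum_mul, ← cell_mul_cell_transpose_apply_self, ← mul_assoc,
          cell_mul_apply_eq hee x x z z]
    _ = A x y * (f z z * (e * eᵀ) x x) := by ring

theorem exists_trace_mul_ne_zero (hchar : ringChar F = 0 ∨ Fintype.card V < ringChar F)
    (hW : IsCoherentAlgebra F W) {A : Matrix V V F} (hA : A ∈ W) (hA0 : A ≠ 0) :
    ∃ B ∈ W, trace (A * B) ≠ 0 := by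
  obtain ⟨x, y, hAxy⟩ : ∃ x y, A x y ≠ 0 := by
    by_contra! h
    exact hA0 (ext h)
  refine ⟨_, hW.transpose_mem _ (W.mul_mem (hW.cell_mem x x) (hW.cell_mem x y)), ?_⟩
  have hcard (s : Finset V) (hs : s.Nonempty) : (s.card : F) ≠ 0 :=
    natCast_ne_zero_of_le_of_lt_ringChar hchar hs.card_pos s.card_le_univ
  rw [trace_mul_cell_transpose hW hA, cell_mul_cell_transpose_apply_self]
  simp only [cell, of_apply, Finset.sum_boole]
  exact mul_ne_zero hAxy (mul_ne_zero (hcard _ ⟨x, by simp⟩) (hcard _ ⟨y, by simp⟩))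

end IsCoherentAlgebra

theorem coherent_algebra_semisimple_general
    (V : Type) [Fintype V] [DecidableEq V] (F : Type) [Field F]
    (hchar : ringChar F = 0 ∨ Fintype.card V < ringChar F)
    (W : Subalgebra F (Matrix V V F)) (hW : IsCoherentAlgebra F W) :
    IsSemisimpleRing W := by
  have : IsArtinianRing W := IsArtinianRing.of_finite F W
  refine isSemisimpleRing_of_nondegenerate (fun a : W => trace (a : Matrix V V F))
    (fun a ha => (isNilpotent_trace_of_isNilpotent (ha.map W.val)).eq_zero) fun a ha0 => ?_
  obtain ⟨B, hB, htr⟩ := hW.exists_trace_mul_ne_zero hchar a.2 (by simpa using ha0)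
  exact ⟨⟨B, hB⟩, htr⟩

/-- Over a field of characteristic `0` or larger than `|V|`, every coherent algebra on `V`
is semisimple with respect to matrix multiplication. -/
theorem coherent_algebra_semisimple
    (V : Type) [Fintype V] [DecidableEq V] [Nonempty V] (F : Type) [Field F]
    (hchar : ringChar F = 0 ∨ Fintype.card V < ringChar F)
    (W : Subalgebra F (Matrix V V F)) (hW : IsCoherentAlgebra F W) :
    IsSemisimpleRing W :=
  coherent_algebra_semisimple_general V F hchar W hW

end
end

section
/- Let γ ∈ P(V^k) be graph-like and let u, v ∈ V^k satisfy γ(u) = γ(v). Then for every r ≤ k, every i ∈ [k]^(r) and every j ∈ [k]^r, γ(u⟨i, pr_j u⟩) = γ(v⟨i, pr_j v⟩). -/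
open Classical Matrix

noncomputable section

variable {V : Type}

/-!
The substituted tuple `u⟨i, pr_j u⟩` is itself a projection `pr_f u` of `u`, along the map
`f = id⟨i, j⟩ : [k] → [k]`. So the theorem is the case `r = k` of consistency, where the
`k`-projection of `γ` is `γ` itself.
-/

theorem prTup_substTup {m k r : ℕ} (a : Tup (Fin m) k) (i : Fin r → Fin k)
    (j : Tup (Fin m) r) (w : Tup V m) :
    prTup (substTup a i j) w = substTup (prTup a w) i (prTup j w) := by
  funext p
  simp only [prTup, substTup]
  split_ifs <;> rfl

theorem substTup_prTup_self {k r : ℕ} (w : Tup V k) (i : Fin r → Fin k) (j : Fin r → Fin k) :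
    substTup w i (prTup j w) = prTup (substTup id i j) w :=
  (prTup_substTup id i j w).symm

theorem extendTup_self [Nonempty V] {k : ℕ} (w : Tup V k) : extendTup k w = w := by
  funext p
  simp [extendTup, p.isLt]

theorem prPart_self_rel [Nonempty V] {k : ℕ} (γ : Setoid (Tup V k)) {w w' : Tup V k} :
    (prPart k γ).r w w' ↔ γ.r w w' := by
  show γ.r (extendTup k w) (extendTup k w') ↔ _
  rw [extendTup_self, extendTup_self]

theorem Consistent.rel_prTup [Nonempty V] {k : ℕ} {γ : Setoid (Tup V k)}
    (hγ : Consistent k γ) {u v : Tup V k} (huv : γ.r u v) (f : Fin k → Fin k) :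
    γ.r (prTup f u) (prTup f v) :=
  (prPart_self_rel γ).1 (hγ u v huv f)

theorem graphLike_subst_proj_general (V : Type) [Nonempty V] (k : ℕ)
    (γ : Setoid (Tup V k)) (hγ : GraphLike γ) (u v : Tup V k) (huv : γ.r u v)
    (r : ℕ) (i : Fin r → Fin k)
    (j : Fin r → Fin k) :
    γ.r (substTup u i (prTup j u)) (substTup v i (prTup j v)) := by
  rw [substTup_prTup_self, substTup_prTup_self]
  exact (hγ.2.1 k le_rfl).rel_prTup huv _

/-- For a graph-like partition, substituting projections of equivalent tuples into
corresponding positions preserves equivalence. -/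
theorem graphLike_subst_proj (V : Type) [Fintype V] [Nonempty V] (k : ℕ)
    (γ : Setoid (Tup V k)) (hγ : GraphLike γ) (u v : Tup V k) (huv : γ.r u v)
    (r : ℕ) (hr : r ≤ k) (i : Fin r → Fin k) (hi : Function.Injective i)
    (j : Fin r → Fin k) :
    γ.r (substTup u i (prTup j u)) (substTup v i (prTup j v)) :=
  graphLike_subst_proj_general V k γ hγ u v huv r i j

end
end

section
/- For all k, r ∈ ℕ and every nonempty finite set V: (1) if γ ∈ P(V^k) is graph-like, then C_{k,r}∘γ is graph-like; (2) if k ≥ 2 and γ ∈ P(V^k) is graph-like and C_{k,r}-stable, then pr_{k-1} γ is C_{k-1,r}-stable. -/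
/-!
Equal counts of the sets `{x | γ(u⟨i,x⟩) = σ}` for all colours `σ` amount to a bijection `e` of
`V^r` with `γ(u⟨i,x⟩) = γ(v⟨i,e x⟩)` for all `x`, and applying a colour-respecting map to both
sides keeps such a bijection, hence equal counts.

By `k`-consistency every projection `pr_p`, `p : [k] → [k]`, respects colours, and
`(pr_p u)⟨i,x⟩ = pr_q (u⟨i',x⟩)` for an injective `i'` avoiding the positions that `p` reads outside
the range of `i`. So `C_{k,r}∘γ` is again `k`-consistent, which already gives invariance and
`r`-consistency for every `r`. For (2), substituting into `w ∈ V^{k-1}` is substituting into its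
extension `(w, w_{k-1}) ∈ V^k` followed by a projection to `V^{k-1}`, which maps `γ`-colours to
`pr_{k-1} γ`-colours by `(k-1)`-consistency.
-/

open Classical Matrix

noncomputable section

variable {V : Type}

theorem substTup_eq_extend {k r : ℕ} (v : Tup V k) (i : Fin r → Fin k) (x : Tup V r) :
    substTup v i x = Function.extend i x v := by
  funext j
  unfold substTup Function.extend
  congr

theorem substTup_apply {k r : ℕ} (v : Tup V k) {i : Fin r → Fin k}
    (hi : Function.Injective i) (x : Tup V r) (s : Fin r) :
    substTup v i x (i s) = x s := by
  rw [substTup_eq_extend, hi.extend_apply]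

theorem substTup_apply_of_forall_ne {k r : ℕ} (v : Tup V k) (i : Fin r → Fin k)
    (x : Tup V r) {m : Fin k} (hm : ∀ s, i s ≠ m) : substTup v i x m = v m := by
  rw [substTup_eq_extend, Function.extend_apply' x v m fun ⟨s, hs⟩ => hm s hs]

theorem substTup_prTup {k k' r : ℕ} {p : Fin k' → Fin k} {i : Fin r → Fin k'}
    {i' : Fin r → Fin k} (hi : Function.Injective i) (hi' : Function.Injective i')
    (hp : ∀ m, (∀ s, i s ≠ m) → ∀ s, i' s ≠ p m) (u : Tup V k) (x : Tup V r) :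
    substTup (prTup p u) i x = prTup (Function.extend i i' p) (substTup u i' x) := by
  funext m
  simp only [prTup]
  by_cases hm : ∃ s, i s = m
  · obtain ⟨s, rfl⟩ := hm
    rw [substTup_apply _ hi, hi.extend_apply, substTup_apply _ hi']
  · push Not at hm
    rw [substTup_apply_of_forall_ne _ _ _ hm,
      Function.extend_apply' _ _ _ fun ⟨s, hs⟩ => hm s hs,
      substTup_apply_of_forall_ne _ _ _ (hp m hm)]
    rfl

theorem extendTup_eq_prTup [Nonempty V] {r : ℕ} (k : ℕ) (hr : 0 < r) (w : Tup V r) :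
    extendTup k w = prTup (fun m : Fin k => (⟨min m (r - 1), by omega⟩ : Fin r)) w := by
  funext m
  simp only [extendTup, prTup]
  split_ifs with hm
  · congr; omega
  · congr; omega

theorem prTup_castLE_extendTup [Nonempty V] {k k' : ℕ} (hk : k' ≤ k) (w : Tup V k') :
    prTup (Fin.castLE hk) (extendTup k w) = w := by
  funext m
  simp [prTup, extendTup]

theorem exists_injective_forall_notMem {k r : ℕ} (B : Finset (Fin k)) (h : r + B.card ≤ k) :
    ∃ i : Fin r → Fin k, Function.Injective i ∧ ∀ s, i s ∉ B := by
  have hcard : Fintype.card (Fin r) ≤ Fintype.card ↥(Bᶜ) := by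
    rw [Fintype.card_fin, Fintype.card_coe, Finset.card_compl, Fintype.card_fin]
    omega
  obtain ⟨e⟩ := Function.Embedding.nonempty_of_card_le hcard
  exact ⟨fun s => e s, Subtype.val_injective.comp e.injective,
    fun s => Finset.mem_compl.mp (e s).2⟩

theorem exists_equiv_rel_of_ncard_eq {α β : Type*} [Finite α] (s : Setoid β) {F G : α → β}
    (h : ∀ b, {a | s.r (F a) b}.ncard = {a | s.r (G a) b}.ncard) :
    ∃ e : α ≃ α, ∀ a, s.r (F a) (G (e a)) := by
  have hfiber : ∀ c : Quotient s,
      Nonempty ({a // Quotient.mk s (F a) = c} ≃ {a // Quotient.mk s (G a) = c}) := by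
    refine Quotient.ind fun b => Finite.card_eq.mp ?_
    simp only [Quotient.eq]
    exact h b
  exact ⟨Equiv.ofFiberEquiv fun c => (hfiber c).some,
    fun a => Quotient.exact (Equiv.ofFiberEquiv_map (fun c => (hfiber c).some) a).symm⟩

theorem ncard_setOf_rel_comp_eq {α β β' : Type*} [Finite α] {s : Setoid β} {s' : Setoid β'}
    {f : β → β'} (hf : ∀ b c, s.r b c → s'.r (f b) (f c)) {F G : α → β}
    (h : ∀ b, {a | s.r (F a) b}.ncard = {a | s.r (G a) b}.ncard) (b' : β') :
    {a | s'.r (f (F a)) b'}.ncard = {a | s'.r (f (G a)) b'}.ncard := by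
  obtain ⟨e, he⟩ := exists_equiv_rel_of_ncard_eq s h
  rw [← Nat.card_coe_set_eq, ← Nat.card_coe_set_eq]
  refine Nat.card_congr (e.subtypeEquiv fun a => ?_)
  have hfa := hf _ _ (he a)
  exact ⟨fun ha => s'.iseqv.trans (s'.iseqv.symm hfa) ha, fun ha => s'.iseqv.trans hfa ha⟩

theorem ncard_cSet_eq_of_substTup_eq [Finite V] {k k' r : ℕ} {γ : Setoid (Tup V k)}
    {γ' : Setoid (Tup V k')} {f : Tup V k → Tup V k'}
    (hf : ∀ a b, γ.r a b → γ'.r (f a) (f b)) {u v : Tup V k} {i' : Fin r → Fin k}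
    (hcount : ∀ w, (CSet γ u i' w).ncard = (CSet γ v i' w).ncard)
    {u' v' : Tup V k'} {i : Fin r → Fin k'}
    (hu : ∀ x, substTup u' i x = f (substTup u i' x))
    (hv : ∀ x, substTup v' i x = f (substTup v i' x)) (w' : Tup V k') :
    (CSet γ' u' i w').ncard = (CSet γ' v' i w').ncard := by
  simp only [CSet, hu, hv]
  exact ncard_setOf_rel_comp_eq hf hcount w'

section Cop

variable {k r : ℕ} {γ : Setoid (Tup V k)}

theorem cop_rel_iff (hrk : r < k) {u v : Tup V k} :
    (Cop r γ).r u v ↔ γ.r u v ∧ ∀ i : Fin r → Fin k, Function.Injective i →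
      ∀ w : Tup V k, (CSet γ u i w).ncard = (CSet γ v i w).ncard := by
  unfold Cop
  rw [if_pos hrk]
  rfl

theorem cop_of_not_lt (hrk : ¬ r < k) : Cop r γ = γ := if_neg hrk

theorem refines_cop : Refines γ (Cop r γ) := by
  intro u v huv
  by_cases hrk : r < k
  · exact ((cop_rel_iff hrk).mp huv).1
  · rwa [cop_of_not_lt hrk] at huv

end Cop

section Consistent

variable [Nonempty V] {k : ℕ} {γ : Setoid (Tup V k)}

theorem consistent_self_iff :
    Consistent k γ ↔ ∀ u v, γ.r u v → ∀ p : Fin k → Fin k, γ.r (prTup p u) (prTup p v) := by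
  show (∀ u v, γ.r u v → ∀ j : Fin k → Fin k,
    γ.r (extendTup k (prTup j u)) (extendTup k (prTup j v))) ↔ _
  simp only [extendTup_self]

theorem Consistent.invariant (hc : Consistent k γ) : Invariant γ :=
  fun u v huv τ => consistent_self_iff.mp hc u v huv τ.symm

theorem Consistent.of_self (hc : Consistent k γ) (r : ℕ) : Consistent r γ := by
  intro u v huv j
  rcases Nat.eq_zero_or_pos r with rfl | hr
  · rw [Subsingleton.elim (prTup j u) (prTup j v)]
  · show γ.r (extendTup k (prTup j u)) (extendTup k (prTup j v))
    rw [extendTup_eq_prTup k hr, extendTup_eq_prTup k hr]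
    exact consistent_self_iff.mp hc u v huv _

theorem Consistent.cop [Finite V] (hc : Consistent k γ) (r : ℕ) : Consistent k (Cop r γ) := by
  rw [consistent_self_iff] at hc ⊢
  intro u v huv p
  by_cases hrk : r < k
  swap
  · rw [cop_of_not_lt hrk] at huv ⊢
    exact hc u v huv p
  rw [cop_rel_iff hrk] at huv ⊢
  obtain ⟨huv, hcount⟩ := huv
  refine ⟨hc u v huv p, fun i hi w => ?_⟩
  -- Substitute instead at `r` positions that `p` does not read outside the range of `i`.
  set B := ((Finset.univ.image i)ᶜ).image p
  have hB : r + B.card ≤ k := by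
    have : B.card ≤ k - r := by
      refine Finset.card_image_le.trans_eq ?_
      rw [Finset.card_compl, Finset.card_image_of_injective _ hi]
      simp
    omega
  obtain ⟨i', hi', hi'B⟩ := exists_injective_forall_notMem B hB
  have hp : ∀ m, (∀ s, i s ≠ m) → ∀ s, i' s ≠ p m := fun m hm s hs =>
    hi'B s (hs ▸ Finset.mem_image_of_mem p (by simpa using hm))
  exact ncard_cSet_eq_of_substTup_eq (hc · · · _) (hcount i' hi')
    (substTup_prTup hi hi' hp u) (substTup_prTup hi hi' hp v) w

theorem Consistent.refines_cop_prPart [Finite V] {k' r : ℕ} (hk : k' ≤ k)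
    (hc : Consistent k' γ) (hstab : Refines (Cop r γ) γ) :
    Refines (Cop r (prPart k' γ)) (prPart k' γ) := by
  intro a b hab
  by_cases hr : r < k'
  swap
  · rwa [cop_of_not_lt hr]
  have hcount := ((cop_rel_iff (hr.trans_le hk)).mp (hstab _ _ hab)).2
  refine (cop_rel_iff hr).mpr ⟨hab, fun i hi w => ?_⟩
  have hι := Fin.castLE_injective hk
  have hp : ∀ m, (∀ s, i s ≠ m) → ∀ s, Fin.castLE hk (i s) ≠ Fin.castLE hk m :=
    fun m hm s hs => hm s (hι hs)
  have hsubst : ∀ (a : Tup V k') x, substTup a i x =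
      prTup (Function.extend i (Fin.castLE hk ∘ i) (Fin.castLE hk))
        (substTup (extendTup k a) (Fin.castLE hk ∘ i) x) := fun a x => by
    rw [← substTup_prTup hi (hι.comp hi) hp, prTup_castLE_extendTup]
  exact ncard_cSet_eq_of_substTup_eq (hc · · · _) (hcount _ (hι.comp hi))
    (hsubst a) (hsubst b) w

end Consistent

theorem GraphLike.cop [Finite V] [Nonempty V] {k : ℕ} {γ : Setoid (Tup V k)}
    (h : GraphLike γ) (r : ℕ) : GraphLike (Cop r γ) := by
  obtain ⟨-, hcons, hpat⟩ := h
  have hc := (hcons k le_rfl).cop r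
  exact ⟨hc.invariant, fun r' _ => hc.of_self r', fun u v huv => hpat u v (refines_cop u v huv)⟩

/-- `C_{k,r}` is a graph-like refinement operator, and projections of graph-like
fixed points are fixed points. -/
theorem c_refinement_procedure (V : Type) [Fintype V] [Nonempty V] (k r : ℕ) :
    (∀ γ : Setoid (Tup V k), GraphLike γ → GraphLike (Cop r γ)) ∧
    (∀ γ : Setoid (Tup V k), 2 ≤ k → GraphLike γ → PartEquiv γ (Cop r γ) →
      PartEquiv (prPart (k - 1) γ) (Cop r (prPart (k - 1) γ))) :=
  ⟨fun _ hγ => hγ.cop r, fun _ _ hγ hstab =>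
    ⟨refines_cop, (hγ.2.1 (k - 1) (k.sub_le 1)).refines_cop_prPart (k.sub_le 1) hstab.2⟩⟩

end
end
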